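/- Let f : [0,∞) → [0,∞) be monotonically increasing with lim_{t→0⁺} f(t) = 0. For X, Y ∈ B̄, if π_f(X,Y) = 0 then X = Y. -/

import Mathlib

open scoped ENNReal Classical

/-- A persistence diagram: a finite multiset of points strictly above the diagonal of `ℝ²`.
Distances in `ℝ × ℝ` are measured by the product (sup-norm, i.e. `p = ∞`) metric `dist`. -/
structure PD where
  pts : Multiset (ℝ × ℝ)
  birth_lt_death : ∀ x ∈ pts, x.1 < x.2

/-- Orthogonal projection of a point onto the diagonal `Δ = {(t, t) : t ∈ ℝ}`. -/
noncomputable def diagProj (x : ℝ × ℝ) : ℝ × ℝ := ((x.1 + x.2) / 2, (x.1 + x.2) / 2)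

/-- The distance of a matched pair: a pair of two diagonal points counts as distance `0`,
otherwise the distance in `ℝ × ℝ` is used. -/
noncomputable def pairCost (u v : ℝ × ℝ) : ℝ :=
  if u.1 = u.2 ∧ v.1 = v.2 then 0 else dist u v

/-- `P` encodes a matching, i.e. a bijection `η : X₀ ⊔ Y₀' → Y₀ ⊔ X₀'`, as the multiset of
matched pairs `(u, η u)`: its first marginal is `X₀ ⊔ Y₀'` and its second is `Y₀ ⊔ X₀'`. -/
def IsMatching (X Y : PD) (P : Multiset ((ℝ × ℝ) × (ℝ × ℝ))) : Prop :=
  P.map Prod.fst = X.pts + Y.pts.map diagProj ∧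
  P.map Prod.snd = Y.pts + X.pts.map diagProj

/-- The bottleneck profile `D_{X,Y}(t) = inf_η |{u : d(u, η u) > t}|`. -/
noncomputable def bprofile (X Y : PD) (t : ℝ) : ℝ≥0∞ :=
  ⨅ P : {P : Multiset ((ℝ × ℝ) × (ℝ × ℝ)) // IsMatching X Y P},
    ((Multiset.countP (fun uv => t < pairCost uv.1 uv.2) P.1 : ℕ) : ℝ≥0∞)

/-- A diagram in the class `B̄`: a countable multiset of points in the closed half-plane
`{(b, d) : b ≤ d}` (represented as an `ℕ`-indexed family; points on the diagonal, of which
countably many copies are freely available for matching, are allowed and serve to pad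
finite diagrams), such that for every `ε > 0` only finitely many points lie at distance
greater than `ε` from the diagonal `Δ`. -/
structure BarB where
  pts : ℕ → ℝ × ℝ
  birth_le_death : ∀ n, (pts n).1 ≤ (pts n).2
  finitePers : ∀ ε : ℝ, 0 < ε → {n | ε < dist (pts n) (diagProj (pts n))}.Finite

/-- The domain `X₀ ⊔ Y₀'` of a matching between diagrams `X, Y ∈ B̄`. -/
noncomputable def matchDom (X Y : BarB) : ℕ ⊕ ℕ → ℝ × ℝ
  | Sum.inl n => X.pts n
  | Sum.inr n => diagProj (Y.pts n)

/-- The codomain `Y₀ ⊔ X₀'` of a matching between diagrams `X, Y ∈ B̄`. -/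
noncomputable def matchCod (X Y : BarB) : ℕ ⊕ ℕ → ℝ × ℝ
  | Sum.inl n => Y.pts n
  | Sum.inr n => diagProj (X.pts n)

/-- The bottleneck profile `D_{X,Y}(t) = inf_η |{u : d(u, η u) > t}|` for diagrams in `B̄`;
matchings are bijections `η : X₀ ⊔ Y₀' → Y₀ ⊔ X₀'`. -/
noncomputable def bprofileB (X Y : BarB) (t : ℝ) : ℝ≥0∞ :=
  ⨅ e : ℕ ⊕ ℕ ≃ ℕ ⊕ ℕ,
    ({i | t < pairCost (matchDom X Y i) (matchCod X Y (e i))}.encard : ℝ≥0∞)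

/-- The `f`-Prokhorov distance `π_f(X,Y) = inf {t > 0 : D_{X,Y}(t) < f(t)}` on `B̄`. -/
noncomputable def prokhorovB (f : ℝ → ℝ) (X Y : BarB) : ℝ≥0∞ :=
  ⨅ t : {t : ℝ // 0 < t ∧ bprofileB X Y t < ENNReal.ofReal (f t)}, ENNReal.ofReal t.1

/-- The indices of the off-diagonal points of a diagram in `B̄`. -/
def BarB.offDiag (X : BarB) : Set ℕ := {n | (X.pts n).1 < (X.pts n).2}

/-- Equality of diagrams in `B̄` as multisets of off-diagonal points: there is a bijection
between the off-diagonal points of `X` and those of `Y` matching equal points. -/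
def BarB.MEquiv (X Y : BarB) : Prop :=
  ∃ σ : X.offDiag ≃ Y.offDiag, ∀ n : X.offDiag, Y.pts (σ n : ℕ) = X.pts (n : ℕ)

/-- The `p`-Wasserstein distance `W_p(X,Y) = inf_η (Σ_u d(u, η u)^p)^(1/p)` on `B̄`. -/
noncomputable def wassersteinB (p : ℝ) (X Y : BarB) : ℝ≥0∞ :=
  ⨅ e : ℕ ⊕ ℕ ≃ ℕ ⊕ ℕ,
    (∑' i, ENNReal.ofReal (pairCost (matchDom X Y i) (matchCod X Y (e i)) ^ p)) ^ (1 / p)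

/-- The empty persistence diagram, viewed in `B̄` (only diagonal padding points). -/
noncomputable def emptyB : BarB where
  pts _ := (0, 0)
  birth_le_death _ := le_refl 0
  finitePers ε hε := by
    have : {n : ℕ | ε < dist ((0 : ℝ), (0 : ℝ)) (diagProj (0, 0))} = ∅ := by
      ext n
      simp [diagProj]
      linarith
    simp only [this]
    exact Set.finite_empty

/-! If `π_f(X, Y) = 0` then, since `f(t) → 0`, there are arbitrarily small `t` with
`D_{X,Y}(t) < f(t) < 1`, i.e. `D_{X,Y}(t) = 0`: for every `ε > 0` some matching moves every point
by at most `ε`. An off-diagonal point `p` of persistence `2δ` lies at distance `≥ δ` from the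
diagonal, and only finitely many points of `Y` have persistence comparable to `δ`, so `p` is
isolated among the points of `Y`. For `ε` small enough every copy of `p` in `X` is therefore
matched to a copy of `p` in `Y`, which bounds the multiplicity of `p` in `X` by that in `Y`;
by symmetry the multiplicities agree. -/

lemma half_pers_le_add_dist (u v : ℝ × ℝ) :
    (u.2 - u.1) / 2 ≤ (v.2 - v.1) / 2 + dist u v := by
  have h1 : |u.1 - v.1| ≤ dist u v := (Real.dist_eq _ _).symm.trans_le (le_max_left _ _)
  have h2 : |u.2 - v.2| ≤ dist u v := (Real.dist_eq _ _).symm.trans_le (le_max_right _ _)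
  linarith [abs_le.mp h1, abs_le.mp h2]

lemma half_pers_le_dist_diagProj (u v : ℝ × ℝ) : (u.2 - u.1) / 2 ≤ dist u (diagProj v) := by
  simpa [diagProj] using half_pers_le_add_dist u (diagProj v)

lemma dist_diagProj (u : ℝ × ℝ) (h : u.1 ≤ u.2) : dist u (diagProj u) = (u.2 - u.1) / 2 := by
  simp only [diagProj, Prod.dist_eq, Real.dist_eq]
  rw [abs_of_nonpos (by linarith), abs_of_nonneg (by linarith), max_eq_right (by linarith)]
  ring

lemma pairCost_comm (u v : ℝ × ℝ) : pairCost u v = pairCost v u := by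
  simp only [pairCost, dist_comm u v, and_comm]

lemma pairCost_eq_dist_of_fst_ne_snd {u : ℝ × ℝ} (hu : u.1 ≠ u.2) (v : ℝ × ℝ) :
    pairCost u v = dist u v :=
  if_neg fun h => hu h.1

lemma matchDom_swap (X Y : BarB) (i : ℕ ⊕ ℕ) : matchDom Y X i = matchCod X Y i := by
  cases i <;> rfl

lemma matchCod_swap (X Y : BarB) (i : ℕ ⊕ ℕ) : matchCod Y X i = matchDom X Y i := by
  cases i <;> rfl

def MatchingWithin (X Y : BarB) (ε : ℝ) : Prop :=
  ∃ e : ℕ ⊕ ℕ ≃ ℕ ⊕ ℕ, ∀ i, pairCost (matchDom X Y i) (matchCod X Y (e i)) ≤ ε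

namespace MatchingWithin

variable {X Y : BarB} {ε : ℝ}

theorem symm (h : MatchingWithin X Y ε) : MatchingWithin Y X ε := by
  obtain ⟨e, he⟩ := h
  refine ⟨e.symm, fun i => ?_⟩
  rw [matchDom_swap X Y, matchCod_swap X Y, pairCost_comm]
  simpa only [e.apply_symm_apply] using he (e.symm i)

theorem mono {ε' : ℝ} (h : MatchingWithin X Y ε) (hε : ε ≤ ε') : MatchingWithin X Y ε' :=
  let ⟨e, he⟩ := h
  ⟨e, fun i => (he i).trans hε⟩

end MatchingWithin

lemma matchingWithin_of_bprofileB_lt_one {X Y : BarB} {t : ℝ} (h : bprofileB X Y t < 1) :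
    MatchingWithin X Y t := by
  obtain ⟨e, he⟩ := iInf_lt_iff.mp h
  have hempty : {i | t < pairCost (matchDom X Y i) (matchCod X Y (e i))} = ∅ :=
    Set.encard_eq_zero.mp (Order.lt_one_iff.mp (by exact_mod_cast he))
  exact ⟨e, fun i => not_lt.mp fun hi => hempty.subset hi⟩

lemma matchingWithin_of_prokhorovB_eq_zero {f : ℝ → ℝ}
    (hf_lim : Filter.Tendsto f (nhdsWithin 0 (Set.Ioi 0)) (nhds 0))
    {X Y : BarB} (h : prokhorovB f X Y = 0) {ε : ℝ} (hε : 0 < ε) : MatchingWithin X Y ε := by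
  obtain ⟨δ, hδ, hfδ⟩ := mem_nhdsGT_iff_exists_Ioo_subset.mp
    (hf_lim.eventually (gt_mem_nhds one_pos))
  have hpos : 0 < min ε δ := lt_min hε hδ
  obtain ⟨⟨t, ht, hD⟩, hlt⟩ := iInf_lt_iff.mp
    (h.trans_lt (ENNReal.ofReal_pos.mpr hpos) : prokhorovB f X Y < ENNReal.ofReal (min ε δ))
  have htε : t < min ε δ := (ENNReal.ofReal_lt_ofReal_iff hpos).mp hlt
  have hft : f t < 1 := hfδ ⟨ht, htε.trans_le (min_le_right _ _)⟩
  exact (matchingWithin_of_bprofileB_lt_one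
    (hD.trans_le (ENNReal.ofReal_le_one.mpr hft.le))).mono (htε.le.trans (min_le_left _ _))

namespace BarB

variable (X : BarB) {p : ℝ × ℝ}

lemma finite_fiber (hp : p.1 < p.2) : {n | X.pts n = p}.Finite := by
  refine (X.finitePers ((p.2 - p.1) / 4) (by linarith)).subset fun n (hn : X.pts n = p) => ?_
  change _ < dist (X.pts n) _
  rw [hn, dist_diagProj p hp.le]
  linarith

lemma exists_pos_forall_dist_lt_imp_eq (hp : p.1 < p.2) :
    ∃ c > 0, ∀ n, dist p (X.pts n) < c → X.pts n = p := by
  set δ := (p.2 - p.1) / 2 with hδ_def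
  have hδ : 0 < δ := by linarith
  have hS := (X.finitePers (δ / 2) (by positivity)).image X.pts
  obtain ⟨r, hr, hball⟩ := Metric.isOpen_iff.mp (hS.sdiff (t := {p})).isClosed.isOpen_compl p
    (fun hp' => hp'.2 rfl)
  refine ⟨min r (δ / 2), by positivity, fun n hn => by_contra fun hne => ?_⟩
  refine hball (Metric.mem_ball'.mpr (hn.trans_le (min_le_left _ _))) ⟨⟨n, ?_, rfl⟩, hne⟩
  have := half_pers_le_add_dist p (X.pts n)
  change δ / 2 < dist (X.pts n) (diagProj (X.pts n))
  rw [dist_diagProj _ (X.birth_le_death n)]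
  linarith [min_le_right r (δ / 2)]

variable {X} in
lemma ncard_fiber_le_of_matchingWithin {Y : BarB} (hp : p.1 < p.2)
    (hXY : ∀ ε > 0, MatchingWithin X Y ε) :
    {n | X.pts n = p}.ncard ≤ {n | Y.pts n = p}.ncard := by
  obtain ⟨c, hc, hY⟩ := Y.exists_pos_forall_dist_lt_imp_eq hp
  have hε : 0 < min c ((p.2 - p.1) / 2) / 2 := by have := sub_pos.mpr hp; positivity
  obtain ⟨e, he⟩ := hXY _ hε
  have hmaps : e '' (Sum.inl '' {n | X.pts n = p}) ⊆ Sum.inl '' {n | Y.pts n = p} := by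
    rintro _ ⟨_, ⟨n, hn : X.pts n = p, rfl⟩, rfl⟩
    have hcost := he (Sum.inl n)
    rw [show matchDom X Y (Sum.inl n) = p from hn, pairCost_eq_dist_of_fst_ne_snd hp.ne] at hcost
    rcases hm : e (Sum.inl n) with m | m <;> rw [hm] at hcost
    · change dist p (Y.pts m) ≤ _ at hcost
      exact ⟨m, hY m (by linarith [min_le_left c ((p.2 - p.1) / 2)]), rfl⟩
    · have := half_pers_le_dist_diagProj p (X.pts m)
      change dist p (diagProj (X.pts m)) ≤ _ at hcost
      exact absurd hcost (by linarith [min_le_right c ((p.2 - p.1) / 2)])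
  calc {n | X.pts n = p}.ncard = (e '' (Sum.inl '' {n | X.pts n = p})).ncard := by
        rw [Set.ncard_image_of_injective _ e.injective,
          Set.ncard_image_of_injective _ Sum.inl_injective]
    _ ≤ (Sum.inl '' {n | Y.pts n = p} : Set (ℕ ⊕ ℕ)).ncard :=
        Set.ncard_le_ncard hmaps ((Y.finite_fiber hp).image _)
    _ = {n | Y.pts n = p}.ncard := Set.ncard_image_of_injective _ Sum.inl_injective

def offDiagFiberEquiv (hp : p.1 < p.2) :
    {a : X.offDiag // X.pts a = p} ≃ {n | X.pts n = p} :=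
  Equiv.subtypeSubtypeEquivSubtype fun {n} (hn : X.pts n = p) =>
    show (X.pts n).1 < (X.pts n).2 from hn ▸ hp

variable {X} in
lemma mEquiv_of_ncard_fiber_eq {Y : BarB}
    (h : ∀ p : ℝ × ℝ, p.1 < p.2 → {n | X.pts n = p}.ncard = {n | Y.pts n = p}.ncard) :
    X.MEquiv Y := by
  have hfib (p : ℝ × ℝ) :
      Nonempty ({a : X.offDiag // X.pts a = p} ≃ {b : Y.offDiag // Y.pts b = p}) := by
    by_cases hp : p.1 < p.2
    · have := (X.finite_fiber hp).to_subtype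
      have := (Y.finite_fiber hp).to_subtype
      obtain ⟨σ⟩ := (Finite.card_eq (α := {n | X.pts n = p}) (β := {n | Y.pts n = p})).mp
        (by rw [Nat.card_coe_set_eq, Nat.card_coe_set_eq, h p hp])
      exact ⟨(X.offDiagFiberEquiv hp).trans (σ.trans (Y.offDiagFiberEquiv hp).symm)⟩
    · have (Z : BarB) : IsEmpty {a : Z.offDiag // Z.pts a = p} := ⟨fun a => hp (a.2 ▸ a.1.2)⟩
      exact ⟨Equiv.equivOfIsEmpty _ _⟩
  exact ⟨Equiv.ofFiberEquiv fun p => (hfib p).some,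
    Equiv.ofFiberEquiv_map (f := fun a : X.offDiag => X.pts a)
      (g := fun b : Y.offDiag => Y.pts b) _⟩

end BarB

theorem prokhorovB_eq_zero_implies_eq_general (f : ℝ → ℝ)
    (hf_lim : Filter.Tendsto f (nhdsWithin 0 (Set.Ioi 0)) (nhds 0))
    (X Y : BarB) (h : prokhorovB f X Y = 0) :
    BarB.MEquiv X Y := by
  have hXY : ∀ ε > 0, MatchingWithin X Y ε := fun ε hε =>
    matchingWithin_of_prokhorovB_eq_zero hf_lim h hε
  exact BarB.mEquiv_of_ncard_fiber_eq fun p hp =>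
    le_antisymm (BarB.ncard_fiber_le_of_matchingWithin hp hXY)
      (BarB.ncard_fiber_le_of_matchingWithin hp fun ε hε => (hXY ε hε).symm)

/-- For monotonically increasing `f : [0,∞) → [0,∞)` with `lim_{t → 0⁺} f(t) = 0` and
`X, Y ∈ B̄`, `π_f(X,Y) = 0` implies `X = Y` (as multisets of off-diagonal points). -/
theorem prokhorovB_eq_zero_implies_eq (f : ℝ → ℝ)
    (hf_nonneg : ∀ t, 0 ≤ t → 0 ≤ f t)
    (hf_mono : ∀ s t, 0 ≤ s → s ≤ t → f s ≤ f t)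
    (hf_lim : Filter.Tendsto f (nhdsWithin 0 (Set.Ioi 0)) (nhds 0))
    (X Y : BarB) (h : prokhorovB f X Y = 0) :
    BarB.MEquiv X Y :=
  prokhorovB_eq_zero_implies_eq_general f hf_lim X Y h
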